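/- The generalized excluded-middle rule GEM (from A, Γ ⊢ C and ¬A, Γ ⊢ C infer Γ ⊢ C) is admissible in LJ extended with the rule KUT: if A, Γ ⊢ C and ¬A, Π ⊢ C are derivable in LJ + KUT, then Γ, Π ⊢ C is derivable in LJ + KUT. -/

import Mathlib

inductive Fml : Type
  | atom (p : ℕ)
  | neg (A : Fml)
  | and (A B : Fml)
  | or (A B : Fml)
  | imp (A B : Fml)
deriving DecidableEq

/-- LJ extended with the rule KUT. -/
inductive LJKut : Multiset Fml → Option Fml → Prop
  | init (A : Fml) : LJKut {A} (some A)
  | wl {Γ Δ} (A : Fml) : LJKut Γ Δ → LJKut (A ::ₘ Γ) Δ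
  | wr {Γ} (A : Fml) : LJKut Γ none → LJKut Γ (some A)
  | cl {Γ Δ} {A : Fml} : LJKut (A ::ₘ A ::ₘ Γ) Δ → LJKut (A ::ₘ Γ) Δ
  | cut {Γ Θ Λ} {A : Fml} :
      LJKut Γ (some A) → LJKut (A ::ₘ Θ) Λ → LJKut (Γ + Θ) Λ
  | negL {Γ} {A : Fml} : LJKut Γ (some A) → LJKut (Fml.neg A ::ₘ Γ) none
  | negR {Γ} {A : Fml} : LJKut (A ::ₘ Γ) none → LJKut Γ (some (Fml.neg A))
  | andL {Γ Δ} {A B : Fml} :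
      LJKut (A ::ₘ B ::ₘ Γ) Δ → LJKut (Fml.and A B ::ₘ Γ) Δ
  | andR {Γ} {A B : Fml} :
      LJKut Γ (some A) → LJKut Γ (some B) → LJKut Γ (some (Fml.and A B))
  | orL {Γ Δ} {A B : Fml} :
      LJKut (A ::ₘ Γ) Δ → LJKut (B ::ₘ Γ) Δ → LJKut (Fml.or A B ::ₘ Γ) Δ
  | orR1 {Γ} {A B : Fml} : LJKut Γ (some A) → LJKut Γ (some (Fml.or A B))
  | orR2 {Γ} {A B : Fml} : LJKut Γ (some B) → LJKut Γ (some (Fml.or A B))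
  | impL {Γ Δ} {A B : Fml} :
      LJKut Γ (some A) → LJKut (B ::ₘ Γ) Δ → LJKut (Fml.imp A B ::ₘ Γ) Δ
  | impR {Γ} {A B : Fml} :
      LJKut (A ::ₘ Γ) (some B) → LJKut Γ (some (Fml.imp A B))
  | kut {Γ Θ Λ} {A : Fml} :
      LJKut (Fml.neg A ::ₘ Γ) none → LJKut (A ::ₘ Θ) Λ → LJKut (Γ + Θ) Λ

/-!
KUT applied against the initial sequent `C ⊢ C` is classical reductio: `¬C, Γ ⊢` gives `Γ ⊢ C`.
Contraposing the first premise gives `¬¬A, ¬C, Γ ⊢`, and KUT on `¬A` with the second premise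
yields `¬C, Γ, Θ ⊢ C`, hence `¬C, Γ, Θ ⊢` by `¬`-left and contraction, and `Γ, Θ ⊢ C` by reductio.
-/

namespace LJKut

theorem byContradiction {Γ : Multiset Fml} {C : Fml} (h : LJKut (Fml.neg C ::ₘ Γ) none) :
    LJKut Γ (some C) := by
  simpa only [add_zero] using kut h (init C)

theorem contrapose {Γ : Multiset Fml} {A C : Fml} (h : LJKut (A ::ₘ Γ) (some C)) :
    LJKut (Fml.neg C ::ₘ Γ) (some (Fml.neg A)) :=
  negR (Multiset.cons_swap A (Fml.neg C) Γ ▸ negL h)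

theorem negL_self {Γ : Multiset Fml} {C : Fml} (h : LJKut (Fml.neg C ::ₘ Γ) (some C)) :
    LJKut (Fml.neg C ::ₘ Γ) none :=
  cl (negL h)

end LJKut

/-- The generalized excluded-middle rule GEM is admissible in LJ + KUT. -/
theorem gem_admissible_in_LJ_kut (A C : Fml) (Γ Θ : Multiset Fml)
    (h1 : LJKut (A ::ₘ Γ) (some C))
    (h2 : LJKut (Fml.neg A ::ₘ Θ) (some C)) :
    LJKut (Γ + Θ) (some C) := by
  have refutes_neg_A : LJKut (Fml.neg (Fml.neg A) ::ₘ Fml.neg C ::ₘ Γ) none :=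
    .negL h1.contrapose
  have proves_C : LJKut (Fml.neg C ::ₘ (Γ + Θ)) (some C) := by
    simpa only [Multiset.cons_add] using LJKut.kut refutes_neg_A h2
  exact LJKut.byContradiction proves_C.negL_self
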